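/- arXiv:2109.06753 — 5 statements merged into one kernel-verified Lean document; each statement's English description precedes it below -/
import Mathlib

section
/- Let X be a complete metric space and let Γ ⊆ X be a nonempty set that is closed, connected, and has finite 1-dimensional Hausdorff measure. Then Γ is compact. -/
open MeasureTheory ENNReal NNReal

/-- Key lemma: if `Γ` is connected, `x ∈ Γ`, and `Γ` has a point outside `ball x r`,
then `μH[1] (Γ ∩ ball x r) ≥ r`. -/
lemma H1_inter_ball_ge
    {X : Type*} [MetricSpace X] [MeasurableSpace X] [BorelSpace X]
    (Γ : Set X) (hconn : IsConnected Γ) {x : X} (hx : x ∈ Γ) {r : ℝ} (hr : 0 < r)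
    (hout : (Γ \ Metric.ball x r).Nonempty) :
    ENNReal.ofReal r ≤ μH[1] (Γ ∩ Metric.ball x r) := by
  obtain ⟨y, hyΓ, hyout⟩ := hout
  have hyr : r ≤ dist y x := by
    simpa [Metric.mem_ball, not_lt] using hyout
  set f : X → ℝ := fun z => dist z x with hf
  have hlip : LipschitzWith 1 f := LipschitzWith.dist_left x
  have hconn' : IsPreconnected (f '' Γ) :=
    hconn.isPreconnected.image f (hlip.continuous.continuousOn)
  have hsub : Set.Ico (0 : ℝ) r ⊆ f '' (Γ ∩ Metric.ball x r) := by
    intro t ht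
    have h0 : (0 : ℝ) ∈ f '' Γ := ⟨x, hx, by simp [hf]⟩
    have hy' : dist y x ∈ f '' Γ := ⟨y, hyΓ, rfl⟩
    have : t ∈ f '' Γ := hconn'.Icc_subset h0 hy' ⟨ht.1, ht.2.le.trans hyr⟩
    obtain ⟨z, hzΓ, hzt⟩ := this
    refine ⟨z, ⟨hzΓ, ?_⟩, hzt⟩
    rw [Metric.mem_ball]
    simp only [hf] at hzt
    rw [hzt]; exact ht.2
  have h1 : μH[1] (Set.Ico (0 : ℝ) r) ≤ μH[1] (f '' (Γ ∩ Metric.ball x r)) :=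
    measure_mono hsub
  have h2 : μH[1] (f '' (Γ ∩ Metric.ball x r)) ≤ μH[1] (Γ ∩ Metric.ball x r) := by
    simpa using hlip.hausdorffMeasure_image_le zero_le_one (Γ ∩ Metric.ball x r)
  have h3 : μH[1] (Set.Ico (0 : ℝ) r) = ENNReal.ofReal r := by
    rw [MeasureTheory.hausdorffMeasure_real, Real.volume_Ico, sub_zero]
  calc ENNReal.ofReal r = μH[1] (Set.Ico (0 : ℝ) r) := h3.symm
    _ ≤ _ := h1.trans h2

/-- If `X` is a complete metric space and `Γ ⊆ X` is nonempty, closed, connected, with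
finite 1-dimensional Hausdorff measure, then `Γ` is compact. -/
theorem closed_connected_finite_H1_compact
    {X : Type*} [MetricSpace X] [CompleteSpace X] [MeasurableSpace X] [BorelSpace X]
    (Γ : Set X) (hne : Γ.Nonempty) (hclosed : IsClosed Γ) (hconn : IsConnected Γ)
    (hfin : μH[1] Γ < ⊤) : IsCompact Γ := by
  refine isCompact_iff_totallyBounded_isComplete.2 ⟨?_, hclosed.isComplete⟩
  rw [Metric.totallyBounded_iff]
  by_contra h
  push_neg at h
  obtain ⟨ε, hε, hcov⟩ := h
  -- we can always add a new ε-separated point in Γ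
  have step : ∀ (s : Finset X), ∃ z ∈ Γ, ∀ y ∈ s, ε ≤ dist z y := by
    intro s
    obtain ⟨z, hzΓ, hz⟩ := Set.not_subset.1 (hcov ↑s s.finite_toSet)
    refine ⟨z, hzΓ, fun y hy => ?_⟩
    by_contra hlt
    exact hz (Set.mem_biUnion hy (by simpa [Metric.mem_ball] using lt_of_not_ge hlt))
  -- for every n, there is an ε-separated subset of Γ of cardinality n
  classical
  have sep : ∀ n : ℕ, ∃ s : Finset X, s.card = n ∧ ↑s ⊆ Γ ∧
      ∀ p ∈ s, ∀ q ∈ s, p ≠ q → ε ≤ dist p q := by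
    intro n
    induction n with
    | zero => exact ⟨∅, by simp⟩
    | succ n ih =>
      obtain ⟨s, hcard, hsΓ, hsep⟩ := ih
      obtain ⟨z, hzΓ, hz⟩ := step s
      have hznot : z ∉ s := by
        intro hzs
        have := hz z hzs
        simp at this
        linarith
      refine ⟨insert z s, by rw [Finset.card_insert_of_notMem hznot, hcard],
        ?_, ?_⟩
      · intro p hp
        rw [Finset.coe_insert, Set.mem_insert_iff] at hp
        rcases hp with h | h
        · exact h ▸ hzΓ
        · exact hsΓ h
      · intro p hp q hq hpq
        rcases Finset.mem_insert.1 hp with hp' | hp' <;>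
          rcases Finset.mem_insert.1 hq with hq' | hq'
        · exact absurd (hp'.trans hq'.symm) hpq
        · exact hp' ▸ hz q hq'
        · rw [dist_comm]; exact hq' ▸ hz p hp'
        · exact hsep p hp' q hq' hpq
  -- each point of a separated set of size ≥ 2 contributes measure ≥ ε/2
  have key : ∀ n : ℕ, 2 ≤ n → (n : ℝ≥0∞) * ENNReal.ofReal (ε / 2) ≤ μH[1] Γ := by
    intro n hn
    obtain ⟨s, hcard, hsΓ, hsep⟩ := sep n
    have hmeas : ∀ p : X, MeasurableSet (Γ ∩ Metric.ball p (ε / 2)) := fun p =>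
      (hclosed.measurableSet.inter Metric.isOpen_ball.measurableSet)
    have hdisj : Set.PairwiseDisjoint (↑s) (fun p => Γ ∩ Metric.ball p (ε / 2)) := by
      intro p hp q hq hpq
      refine Set.disjoint_left.2 fun z ⟨_, hzp⟩ ⟨_, hzq⟩ => ?_
      have := hsep p hp q hq hpq
      rw [Metric.mem_ball] at hzp hzq
      have : dist p q ≤ dist z p + dist z q := dist_triangle_left p q z
      linarith [hsep p hp q hq hpq]
    have hlow : ∀ p ∈ s, ENNReal.ofReal (ε / 2) ≤ μH[1] (Γ ∩ Metric.ball p (ε / 2)) := by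
      intro p hp
      -- there is another point q ∈ s, q ≠ p, with dist p q ≥ ε > ε/2
      have : 1 < s.card := by omega
      obtain ⟨q, hq, hqp⟩ := Finset.exists_mem_ne this p
      refine H1_inter_ball_ge Γ hconn (hsΓ hp) (by linarith) ⟨q, hsΓ hq, ?_⟩
      simp only [Metric.mem_ball, not_lt]
      have := hsep q hq p hp hqp
      linarith
    calc (n : ℝ≥0∞) * ENNReal.ofReal (ε / 2)
        = ∑ p ∈ s, ENNReal.ofReal (ε / 2) := by
          rw [Finset.sum_const, hcard, nsmul_eq_mul]
      _ ≤ ∑ p ∈ s, μH[1] (Γ ∩ Metric.ball p (ε / 2)) := Finset.sum_le_sum hlow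
      _ = μH[1] (⋃ p ∈ s, Γ ∩ Metric.ball p (ε / 2)) :=
          (measure_biUnion_finset hdisj fun p _ => hmeas p).symm
      _ ≤ μH[1] Γ := measure_mono (by simp [Set.iUnion_subset_iff, Set.inter_subset_left])
  -- contradiction: n * (ε/2) is unbounded
  have hc : ENNReal.ofReal (ε / 2) ≠ 0 := by
    simp [ENNReal.ofReal_eq_zero]; linarith
  have hctop : ENNReal.ofReal (ε / 2) ≠ ⊤ := ENNReal.ofReal_ne_top
  have hdiv : μH[1] Γ / ENNReal.ofReal (ε / 2) ≠ ⊤ := (ENNReal.div_lt_top hfin.ne hc).ne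
  obtain ⟨n, hn⟩ := ENNReal.exists_nat_gt hdiv
  have h2n := key (max n 2) (le_max_right _ _)
  have hn' : (n : ℝ≥0∞) ≤ (max n 2 : ℕ) := by exact_mod_cast Nat.cast_le.2 (le_max_left n 2)
  have : (n : ℝ≥0∞) * ENNReal.ofReal (ε / 2) ≤ μH[1] Γ :=
    le_trans (mul_le_mul_left hn' _) h2n
  have : (n : ℝ≥0∞) ≤ μH[1] Γ / ENNReal.ofReal (ε / 2) :=
    (ENNReal.le_div_iff_mul_le (Or.inl hc) (Or.inl hctop)).2 this
  exact absurd this (not_le.2 hn)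
end

section
/- Let (X, M) be a measurable space and N a nonempty collection of sets in M. For every σ-finite measure μ on (X, M) there exists a unique decomposition μ = μ_N + μ_N^⊥ as a sum of measures on (X, M), where μ_N is carried by N (i.e., there exist N₁, N₂, … ∈ N with μ_N(X \ ⋃ᵢ Nᵢ) = 0) and μ_N^⊥ is singular to N (i.e., μ_N^⊥(N) = 0 for every N ∈ N). -/
/-!
Replace `μ` by a finite measure `ν` with `μ ≪ ν`. Among countable unions of members of `𝒩`,
which are closed under countable unions, pick `U` with `ν U` maximal: then `ν (A \ U) = 0`, hence
`μ (A \ U) = 0`, for every `A ∈ 𝒩`, and `μ = μ|U + μ|Uᶜ` is the decomposition. Conversely, if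
`μ = q₁ + q₂` with `q₁` carried by `W` and `q₂` singular to `𝒩`, then `q₂ U = 0`, and
`q₁ Uᶜ ≤ q₁ (W \ U) + q₁ Wᶜ = 0`; these two facts force `q₁ = μ|U` and `q₂ = μ|Uᶜ`.
-/

open MeasureTheory Set

section CountableUnions

variable {X : Type*} {𝒩 : Set (Set X)}

def countableUnions (𝒩 : Set (Set X)) : Set (Set X) :=
  {s | ∃ f : ℕ → Set X, (∀ i, f i ∈ 𝒩) ∧ ⋃ i, f i = s}

theorem subset_countableUnions : 𝒩 ⊆ countableUnions 𝒩 :=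
  fun s hs => ⟨fun _ => s, fun _ => hs, iUnion_const s⟩

theorem iUnion_mem_countableUnions {f : ℕ → Set X} (hf : ∀ i, f i ∈ countableUnions 𝒩) :
    ⋃ i, f i ∈ countableUnions 𝒩 := by
  choose F hF hFf using hf
  refine ⟨fun k => F k.unpair.1 k.unpair.2, fun k => hF _ _, ?_⟩
  simp only [iUnion_unpair, hFf]

theorem MeasurableSet.of_mem_countableUnions [MeasurableSpace X]
    (hmeas : ∀ A ∈ 𝒩, MeasurableSet A) {s : Set X} (hs : s ∈ countableUnions 𝒩) :
    MeasurableSet s := by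
  obtain ⟨f, hf, rfl⟩ := hs
  exact .iUnion fun i => hmeas _ (hf i)

end CountableUnions

theorem union_mem_of_forall_iUnion_mem {X : Type*} {C : Set (Set X)}
    (hunion : ∀ f : ℕ → Set X, (∀ i, f i ∈ C) → ⋃ i, f i ∈ C)
    {s t : Set X} (hs : s ∈ C) (ht : t ∈ C) : s ∪ t ∈ C := by
  have := hunion (fun n => Nat.casesOn n s fun _ => t) (by rintro (_ | _) <;> assumption)
  rwa [← union_iUnion_nat_succ, iUnion_const] at this

section ExhaustingSet

variable {X : Type*} [MeasurableSpace X] {C : Set (Set X)}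

theorem exists_mem_forall_measure_diff_eq_zero_of_isFiniteMeasure (hne : C.Nonempty)
    (hmeas : ∀ s ∈ C, MeasurableSet s)
    (hunion : ∀ f : ℕ → Set X, (∀ i, f i ∈ C) → ⋃ i, f i ∈ C)
    (ν : Measure X) [IsFiniteMeasure ν] : ∃ U ∈ C, ∀ s ∈ C, ν (s \ U) = 0 := by
  obtain ⟨u, -, hu, hmem⟩ := exists_seq_tendsto_sSup (hne.image ν) (OrderTop.bddAbove _)
  choose F hFC hFu using hmem
  have hUC : ⋃ n, F n ∈ C := hunion F hFC
  have hmax : ∀ s ∈ C, ν s ≤ ν (⋃ n, F n) := fun s hs =>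
    (le_sSup (mem_image_of_mem ν hs)).trans <|
      le_of_tendsto' hu fun n => hFu n ▸ measure_mono (subset_iUnion F n)
  refine ⟨⋃ n, F n, hUC, fun s hs => ?_⟩
  set U := ⋃ n, F n
  have hle : ν U + ν (s \ U) ≤ ν U + 0 := by
    rw [add_zero, ← measure_union disjoint_sdiff_right ((hmeas s hs).diff (hmeas U hUC)),
      union_sdiff_self, union_comm]
    exact hmax _ (union_mem_of_forall_iUnion_mem hunion hs hUC)
  exact nonpos_iff_eq_zero.1 (ENNReal.le_of_add_le_add_left (measure_ne_top ν U) hle)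

theorem exists_mem_forall_measure_diff_eq_zero (hne : C.Nonempty)
    (hmeas : ∀ s ∈ C, MeasurableSet s)
    (hunion : ∀ f : ℕ → Set X, (∀ i, f i ∈ C) → ⋃ i, f i ∈ C)
    (μ : Measure X) [SFinite μ] : ∃ U ∈ C, ∀ s ∈ C, μ (s \ U) = 0 := by
  obtain ⟨ν, _, hμν, -⟩ := exists_isFiniteMeasure_absolutelyContinuous μ
  obtain ⟨U, hUC, hU⟩ :=
    exists_mem_forall_measure_diff_eq_zero_of_isFiniteMeasure hne hmeas hunion ν
  exact ⟨U, hUC, fun s hs => hμν (hU s hs)⟩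

end ExhaustingSet

theorem MeasureTheory.Measure.restrict_add_eq_left {X : Type*} [MeasurableSpace X]
    {μ ν : Measure X} {s : Set X} (hμ : μ sᶜ = 0) (hν : ν s = 0) : (μ + ν).restrict s = μ := by
  rw [Measure.restrict_add, restrict_eq_self_of_ae_mem (mem_ae_iff.2 hμ),
    Measure.restrict_eq_zero.2 hν, add_zero]

/-- Lebesgue-type decomposition: a σ-finite measure splits uniquely into a part carried by a
nonempty family `𝒩` of measurable sets and a part singular to `𝒩`. -/
theorem carried_singular_decomposition
    {X : Type*} [MeasurableSpace X] (𝒩 : Set (Set X)) (hne : 𝒩.Nonempty)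
    (hmeas : ∀ A ∈ 𝒩, MeasurableSet A)
    (μ : Measure X) [SigmaFinite μ] :
    ∃! p : Measure X × Measure X,
      μ = p.1 + p.2 ∧
      (∃ f : ℕ → Set X, (∀ i, f i ∈ 𝒩) ∧ p.1 ((⋃ i, f i)ᶜ) = 0) ∧
      (∀ A ∈ 𝒩, p.2 A = 0) := by
  obtain ⟨_, ⟨g, hg, rfl⟩, hU⟩ := exists_mem_forall_measure_diff_eq_zero
    (hne.mono subset_countableUnions) (fun _ => MeasurableSet.of_mem_countableUnions hmeas)
    (fun _ => iUnion_mem_countableUnions) μ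
  set U := ⋃ i, g i
  have hUmeas : MeasurableSet U := .iUnion fun i => hmeas _ (hg i)
  refine ⟨(μ.restrict U, μ.restrict Uᶜ), ⟨(Measure.restrict_add_restrict_compl hUmeas).symm,
    ⟨g, hg, mem_ae_iff.1 (ae_restrict_mem hUmeas)⟩, fun A hA => ?_⟩, ?_⟩
  · rw [Measure.restrict_apply (hmeas A hA), ← sdiff_eq]
    exact hU A (subset_countableUnions hA)
  rintro ⟨q₁, q₂⟩ ⟨rfl, ⟨f, hf, hq₁⟩, hq₂⟩
  have hq₂U : q₂ U = 0 := measure_iUnion_null fun i => hq₂ _ (hg i)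
  have hq₁U : q₁ Uᶜ = 0 := by
    have hfU : q₁ ((⋃ i, f i) \ U) = 0 :=
      Measure.AbsolutelyContinuous.rfl.add_right q₂ (hU _ ⟨f, hf, rfl⟩)
    exact measure_mono_null (fun x hx => (em _).imp (fun hxf => ⟨hxf, hx⟩) id)
      (measure_union_null hfU hq₁)
  refine Prod.ext (Measure.restrict_add_eq_left hq₁U hq₂U).symm ?_
  rw [add_comm]
  exact (Measure.restrict_add_eq_left (by rwa [compl_compl]) hq₁U).symm
end

section
/- Let μ be a Borel measure on a metric space X that is finite on bounded sets and let s > 0. Then μ is absolutely continuous with respect to the s-dimensional packing measure 𝒫^s if and only if liminf_{r↓0} (2r)^{-s} μ(B(x,r)) < ∞ for μ-almost every x ∈ X. -/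
/-!
Where the lower density is below `b`, Vitali's `5r`-covering lemma turns the small balls with
`μ (B(x, r)) < b (2r)^s` into packings, so `μ A ≤ 5^s b 𝒫^s(A)`: `μ` vanishes on `𝒫^s`-null sets
of finite density.

Conversely, for every `n` the points of infinite density are exhausted by the increasing closed
sets on which `μ (B(x, r)) ≥ n (2r)^s` for all `r ≤ 1 / (k + 1)`. Inside a ball of finite measure a
diagonal choice `k = κ n` keeps a closed set `L` of positive measure lying in all of them; packings
of `L` then have weight at most `μ(ball) / n` for every `n`, so `𝒫^s(L) = 0`.
-/

open MeasureTheory Metric Set Filter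
open scoped ENNReal Topology

variable {X : Type*} [MetricSpace X] [MeasurableSpace X] [BorelSpace X]

/-- A `δ`-packing in `E`: a countable family of (center, radius) pairs whose centers lie in `E`,
with positive radii satisfying `2r ≤ δ`, and whose closed balls are pairwise disjoint. -/
def IsPacking (E : Set X) (δ : ℝ) (P : Set (X × ℝ)) : Prop :=
  P.Countable ∧ (∀ p ∈ P, p.1 ∈ E ∧ 0 < p.2 ∧ 2 * p.2 ≤ δ) ∧
    P.Pairwise fun p q => Disjoint (closedBall p.1 p.2) (closedBall q.1 q.2)

/-- The `s`-dimensional packing premeasure `P^s` (radius convention). -/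
noncomputable def packingPre (s : ℝ) (E : Set X) : ℝ≥0∞ :=
  ⨅ (δ : ℝ) (_ : 0 < δ), ⨆ (P : Set (X × ℝ)) (_ : IsPacking E δ P),
    ∑' p : P, ENNReal.ofReal ((2 * (p : X × ℝ).2) ^ s)

/-- The `s`-dimensional packing measure `𝒫^s`. -/
noncomputable def packingMeasure (s : ℝ) (E : Set X) : ℝ≥0∞ :=
  ⨅ (F : ℕ → Set X) (_ : E ⊆ ⋃ i, F i), ∑' i, packingPre s (F i)

/-- The lower `s`-density of `μ` at `x`: `liminf_{r↓0} μ(B(x,r)) / (2r)^s`. -/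
noncomputable def lowerDensity (μ : Measure X) (s : ℝ) (x : X) : ℝ≥0∞ :=
  Filter.liminf (fun r : ℝ => μ (closedBall x r) / ENNReal.ofReal ((2 * r) ^ s))
    (nhdsWithin 0 (Ioi 0))

lemma exists_measure_inter_iInter_ne_zero {α : Type*} [MeasurableSpace α] {μ : Measure α}
    {A : Set α} (hA0 : μ A ≠ 0) (hAtop : μ A ≠ ⊤) {G : ℕ → ℕ → Set α}
    (hG : ∀ k i, MeasurableSet (G k i)) (hmono : ∀ i, Monotone (G · i))
    (hcov : ∀ i, A ⊆ ⋃ k, G k i) : ∃ κ : ℕ → ℕ, μ (A ∩ ⋂ i, G (κ i) i) ≠ 0 := by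
  obtain ⟨ε, hε0, hεsum⟩ := ENNReal.exists_pos_sum_of_countable hA0 ℕ
  have hsmall : ∀ i, ∃ k, μ (A \ G k i) < ε i := by
    intro i
    have hAG : Monotone fun k => A ∩ G k i := fun _ _ hkl =>
      inter_subset_inter_right A (hmono i hkl)
    have hsup : ⨆ k, μ (A ∩ G k i) = μ A := by
      rw [← hAG.measure_iUnion, ← inter_iUnion, inter_eq_left.mpr (hcov i)]
    have hlt : μ A - ε i < μ A := ENNReal.sub_lt_self hAtop hA0 (by simpa using (hε0 i).ne')
    obtain ⟨k, hk⟩ := lt_iSup_iff.mp (hlt.trans_eq hsup.symm)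
    refine ⟨k, (ENNReal.add_lt_add_iff_left
      (measure_ne_top_of_subset (inter_subset_left (t := G k i)) hAtop)).mp ?_⟩
    rw [measure_inter_add_sdiff A (hG k i)]
    exact ENNReal.lt_add_of_sub_lt_right (Or.inl hAtop) hk
  choose κ hκ using hsmall
  refine ⟨κ, fun h0 => (lt_irrefl (μ A)) ?_⟩
  calc μ A ≤ μ (A ∩ ⋂ i, G (κ i) i) + μ (A \ ⋂ i, G (κ i) i) := measure_le_inter_add_sdiff _ _ _
    _ ≤ 0 + ∑' i, μ (A \ G (κ i) i) := by
        rw [h0, sdiff_iInter]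
        gcongr
        exact measure_iUnion_le _
    _ ≤ ∑' i, (ε i : ℝ≥0∞) := by
        rw [zero_add]
        exact ENNReal.tsum_le_tsum fun i => (hκ i).le
    _ < μ A := hεsum

lemma ofReal_two_mul_rpow_ne_zero (s : ℝ) {r : ℝ} (hr : 0 < r) :
    ENNReal.ofReal ((2 * r) ^ s) ≠ 0 :=
  (ENNReal.ofReal_pos.mpr (Real.rpow_pos_of_pos (by positivity) s)).ne'

lemma ofReal_two_mul_five_mul_rpow (s : ℝ) {r : ℝ} (hr : 0 ≤ r) :
    ENNReal.ofReal ((2 * (5 * r)) ^ s) = ENNReal.ofReal (5 ^ s) * ENNReal.ofReal ((2 * r) ^ s) := by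
  rw [← ENNReal.ofReal_mul (by positivity), ← Real.mul_rpow (by norm_num) (by positivity)]
  ring_nf

omit [MeasurableSpace X] [BorelSpace X] in
lemma packingPre_empty (s : ℝ) : packingPre s (∅ : Set X) = 0 := by
  refine le_antisymm ((iInf₂_le 1 one_pos).trans (iSup₂_le fun P hP => ?_)) bot_le
  have hP : P = ∅ := eq_empty_of_forall_notMem fun p hp => (hP.2.1 p hp).1
  subst hP
  simp

omit [MeasurableSpace X] [BorelSpace X] in
lemma packingMeasure_le_packingPre (s : ℝ) (E : Set X) :
    packingMeasure s E ≤ packingPre s E := by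
  classical
  refine (iInf₂_le (fun i => if i = 0 then E else ∅) (subset_iUnion_of_subset 0 (by simp))).trans ?_
  rw [tsum_eq_single 0 fun i hi => by simp [hi, packingPre_empty]]
  simp

omit [MeasurableSpace X] [BorelSpace X] in
lemma packingMeasure_mono (s : ℝ) {E F : Set X} (h : E ⊆ F) :
    packingMeasure s E ≤ packingMeasure s F :=
  le_iInf₂ fun G hG => iInf₂_le G (h.trans hG)

omit [MeasurableSpace X] [BorelSpace X] in
lemma tsum_le_iSup_isPacking {s δ : ℝ} {F : Set X} {u : Set (X × ℝ)}
    (hadm : ∀ p ∈ u, p.1 ∈ F ∧ 0 < p.2 ∧ 2 * p.2 ≤ δ)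
    (hdisj : u.PairwiseDisjoint fun p : X × ℝ => closedBall p.1 p.2) :
    ∑' p : u, ENNReal.ofReal ((2 * (p : X × ℝ).2) ^ s) ≤
      ⨆ (P : Set (X × ℝ)) (_ : IsPacking F δ P),
        ∑' p : P, ENNReal.ofReal ((2 * (p : X × ℝ).2) ^ s) := by
  classical
  -- `u` need not be countable, but each of its finite subfamilies is a packing.
  rw [ENNReal.tsum_eq_iSup_sum]
  refine iSup_le fun v => ?_
  have hv : (v.map (Function.Embedding.subtype _) : Set (X × ℝ)) ⊆ u := by simp
  refine le_trans (le_of_eq ?_) (le_iSup₂_of_le (v.map (Function.Embedding.subtype _) : Set _)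
    ⟨Finset.countable_toSet _, fun p hp => hadm p (hv hp), hdisj.subset hv⟩ le_rfl)
  rw [Finset.tsum_subtype' _ fun p : X × ℝ => ENNReal.ofReal ((2 * p.2) ^ s), Finset.sum_map]
  rfl

omit [BorelSpace X] in
lemma exists_measure_closedBall_lt {μ : Measure X} {s : ℝ} {b : ℝ≥0∞} {x : X}
    (h : lowerDensity μ s x < b) {ε : ℝ} (hε : 0 < ε) :
    ∃ r ∈ Ioo 0 ε, μ (closedBall x r) < b * ENNReal.ofReal ((2 * r) ^ s) := by
  have hfreq : ∃ᶠ r in 𝓝[>] (0 : ℝ), μ (closedBall x r) / ENNReal.ofReal ((2 * r) ^ s) < b :=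
    frequently_lt_of_liminf_lt (by isBoundedDefault) h
  obtain ⟨r, hlt, hr⟩ := (hfreq.and_eventually (Ioo_mem_nhdsGT hε)).exists
  rw [ENNReal.div_lt_iff (Or.inl (ofReal_two_mul_rpow_ne_zero s hr.1))
    (Or.inl ENNReal.ofReal_ne_top)] at hlt
  exact ⟨r, hr, hlt⟩

omit [BorelSpace X] in
lemma measure_le_mul_iSup_isPacking (μ : Measure X) {s : ℝ} {b : ℝ≥0∞} (hb0 : b ≠ 0)
    {D F : Set X} (hDF : D ⊆ F) (hD : ∀ x ∈ D, lowerDensity μ s x < b) {δ : ℝ} (hδ : 0 < δ) :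
    μ D ≤ b * ENNReal.ofReal (5 ^ s) * ⨆ (P : Set (X × ℝ)) (_ : IsPacking F δ P),
      ∑' p : P, ENNReal.ofReal ((2 * (p : X × ℝ).2) ^ s) := by
  set S := ⨆ (P : Set (X × ℝ)) (_ : IsPacking F δ P),
    ∑' p : P, ENNReal.ofReal ((2 * (p : X × ℝ).2) ^ s)
  rcases eq_or_ne S ⊤ with hS | hS
  · rw [hS, ENNReal.mul_top (mul_ne_zero hb0 (by simp; positivity))]
    exact le_top
  set t : Set (X × ℝ) := {p | p.1 ∈ D ∧ 0 < p.2 ∧ 2 * p.2 ≤ δ ∧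
    μ (closedBall p.1 (5 * p.2)) < b * ENNReal.ofReal ((2 * (5 * p.2)) ^ s)}
  obtain ⟨u, hut, hdisj, hcov⟩ :=
    Vitali.exists_disjoint_subfamily_covering_enlargement_closedBall t Prod.fst Prod.snd
      (δ / 2) (fun p hp => by linarith [hp.2.2.1]) 5 (by norm_num)
  have hsum : ∑' p : u, ENNReal.ofReal ((2 * (p : X × ℝ).2) ^ s) ≤ S :=
    tsum_le_iSup_isPacking (fun p hp => ⟨hDF (hut hp).1, (hut hp).2.1, (hut hp).2.2.1⟩) hdisj
  have hcount : u.Countable := by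
    have := Summable.countable_support_ennreal (ne_top_of_le_ne_top hS hsum)
    rwa [eq_univ_of_forall fun p => Function.mem_support.mpr
      (ofReal_two_mul_rpow_ne_zero s (hut p.2).2.1),
      countable_univ_iff, countable_coe_iff] at this
  have hDcov : D ⊆ ⋃ p ∈ u, closedBall p.1 (5 * p.2) := by
    intro x hx
    obtain ⟨r, ⟨hr0, hrδ⟩, hr⟩ :=
      exists_measure_closedBall_lt (hD x hx) (by positivity : 0 < 5 * δ / 2)
    have hxt : (x, r / 5) ∈ t :=
      ⟨hx, by positivity, by linarith, by rwa [mul_div_cancel₀ r (by norm_num)]⟩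
    obtain ⟨q, hqu, hq⟩ := hcov _ hxt
    exact mem_biUnion hqu (hq (mem_closedBall_self (by positivity)))
  calc μ D ≤ ∑' p : u, μ (closedBall (p : X × ℝ).1 (5 * (p : X × ℝ).2)) :=
        (measure_mono hDcov).trans (measure_biUnion_le μ hcount _)
    _ ≤ ∑' p : u, b * ENNReal.ofReal (5 ^ s) * ENNReal.ofReal ((2 * (p : X × ℝ).2) ^ s) := by
        refine ENNReal.tsum_le_tsum fun p => (hut p.2).2.2.2.le.trans_eq ?_
        rw [ofReal_two_mul_five_mul_rpow s (hut p.2).2.1.le, mul_assoc]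
    _ ≤ b * ENNReal.ofReal (5 ^ s) * S := by
        rw [ENNReal.tsum_mul_left]
        gcongr

omit [BorelSpace X] in
lemma measure_le_mul_packingPre (μ : Measure X) {s : ℝ} {b : ℝ≥0∞} (hb0 : b ≠ 0) (hbt : b ≠ ⊤)
    {D F : Set X} (hDF : D ⊆ F) (hD : ∀ x ∈ D, lowerDensity μ s x < b) :
    μ D ≤ b * ENNReal.ofReal (5 ^ s) * packingPre s F := by
  have hC0 : b * ENNReal.ofReal (5 ^ s) ≠ 0 := mul_ne_zero hb0 (by simp; positivity)
  have hCtop : b * ENNReal.ofReal (5 ^ s) ≠ ⊤ := ENNReal.mul_ne_top hbt ENNReal.ofReal_ne_top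
  simp only [packingPre, ENNReal.mul_iInf_of_ne hC0 hCtop]
  exact le_iInf₂ fun δ hδ => measure_le_mul_iSup_isPacking μ hb0 hDF hD hδ

omit [BorelSpace X] in
lemma measure_le_mul_packingMeasure (μ : Measure X) {s : ℝ} {b : ℝ≥0∞} (hb0 : b ≠ 0)
    (hbt : b ≠ ⊤) {A : Set X} (hA : ∀ x ∈ A, lowerDensity μ s x < b) :
    μ A ≤ b * ENNReal.ofReal (5 ^ s) * packingMeasure s A := by
  have hC0 : b * ENNReal.ofReal (5 ^ s) ≠ 0 := mul_ne_zero hb0 (by simp; positivity)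
  have hCtop : b * ENNReal.ofReal (5 ^ s) ≠ ⊤ := ENNReal.mul_ne_top hbt ENNReal.ofReal_ne_top
  simp only [packingMeasure, ENNReal.mul_iInf_of_ne hC0 hCtop]
  refine le_iInf₂ fun F hF => ?_
  calc μ A ≤ ∑' i, μ (A ∩ F i) := by
        refine (measure_mono ?_).trans (measure_iUnion_le _)
        rw [← inter_iUnion]
        exact subset_inter subset_rfl hF
    _ ≤ ∑' i, b * ENNReal.ofReal (5 ^ s) * packingPre s (F i) := ENNReal.tsum_le_tsum fun i =>
        measure_le_mul_packingPre μ hb0 hbt inter_subset_right fun x hx => hA x hx.1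
    _ = b * ENNReal.ofReal (5 ^ s) * ∑' i, packingPre s (F i) := ENNReal.tsum_mul_left

omit [BorelSpace X] in
lemma measure_inter_setOf_lowerDensity_lt_top_eq_zero (μ : Measure X) {s : ℝ} {E : Set X}
    (hE : packingMeasure s E = 0) : μ (E ∩ {x | lowerDensity μ s x < ⊤}) = 0 := by
  have hcov : E ∩ {x | lowerDensity μ s x < ⊤} ⊆
      ⋃ n : ℕ, E ∩ {x | lowerDensity μ s x < n + 1} := fun x ⟨hxE, hx⟩ =>
    let ⟨n, hn⟩ := ENNReal.exists_nat_gt hx.ne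
    mem_iUnion.mpr ⟨n, hxE, hn.trans (ENNReal.lt_add_right (by simp) one_ne_zero)⟩
  refine measure_mono_null hcov (measure_iUnion_null fun n => nonpos_iff_eq_zero.mp ?_)
  have hpiece : packingMeasure s (E ∩ {x | lowerDensity μ s x < n + 1}) = 0 :=
    le_antisymm ((packingMeasure_mono s inter_subset_left).trans_eq hE) bot_le
  calc μ (E ∩ {x | lowerDensity μ s x < n + 1})
      ≤ (n + 1) * ENNReal.ofReal (5 ^ s) *
          packingMeasure s (E ∩ {x | lowerDensity μ s x < n + 1}) :=
        measure_le_mul_packingMeasure μ (by simp) (by simp) fun x hx => hx.2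
    _ = 0 := by rw [hpiece, mul_zero]

def uniformlyDenseSet (μ : Measure X) (s : ℝ) (a : ℝ≥0∞) (δ : ℝ) : Set X :=
  {x | ∀ r, 0 < r → r ≤ δ → a * ENNReal.ofReal ((2 * r) ^ s) ≤ μ (closedBall x r)}

omit [BorelSpace X] in
lemma uniformlyDenseSet_antitone (μ : Measure X) (s : ℝ) (a : ℝ≥0∞) :
    Antitone (uniformlyDenseSet μ s a) :=
  fun _ _ hδ _ hx r hr hrδ => hx r hr (hrδ.trans hδ)

omit [BorelSpace X] in
lemma isClosed_uniformlyDenseSet (μ : Measure X) (s : ℝ) {a : ℝ≥0∞} (ha : a ≠ ⊤) (δ : ℝ) :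
    IsClosed (uniformlyDenseSet μ s a δ) := by
  refine isClosed_of_closure_subset fun x hx r hr hrδ => ?_
  -- Each `closedBall y r'` with `y` near `x` and `r' < r` lies in `closedBall x r`;
  -- let `r' ↑ r` and use continuity of the gauge.
  have hleft : ∀ r' ∈ Ioo 0 r, a * ENNReal.ofReal ((2 * r') ^ s) ≤ μ (closedBall x r) := by
    rintro r' ⟨hr'0, hr'r⟩
    obtain ⟨y, hy, hxy⟩ := Metric.mem_closure_iff.mp hx (r - r') (by linarith)
    refine (hy r' hr'0 (hr'r.le.trans hrδ)).trans (measure_mono ?_)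
    exact closedBall_subset_closedBall' (by rw [dist_comm]; linarith)
  have hcont : ContinuousAt (fun r' : ℝ => a * ENNReal.ofReal ((2 * r') ^ s)) r := by
    refine (ENNReal.continuous_const_mul ha).continuousAt.comp
      (ENNReal.continuous_ofReal.continuousAt.comp ?_)
    exact (Real.continuousAt_rpow_const _ s (Or.inl (by positivity))).comp
      (continuous_const.mul continuous_id).continuousAt
  refine le_of_tendsto (hcont.tendsto.mono_left (nhdsWithin_le_nhds (s := Iio r))) ?_
  filter_upwards [Ioo_mem_nhdsLT hr] using hleft

omit [BorelSpace X] in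
lemma exists_pos_mem_uniformlyDenseSet {μ : Measure X} {s : ℝ} {a : ℝ≥0∞} {x : X}
    (h : a < lowerDensity μ s x) : ∃ δ > 0, x ∈ uniformlyDenseSet μ s a δ := by
  have hev : ∀ᶠ r in 𝓝[>] (0 : ℝ), a < μ (closedBall x r) / ENNReal.ofReal ((2 * r) ^ s) :=
    eventually_lt_of_lt_liminf h (by isBoundedDefault)
  obtain ⟨δ, hδ, hδsub⟩ := mem_nhdsGT_iff_exists_Ioc_subset.mp hev
  refine ⟨δ, hδ, fun r hr hrδ => ?_⟩
  have hlt := hδsub ⟨hr, hrδ⟩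
  rw [mem_ofPred_eq, ENNReal.lt_div_iff_mul_lt (Or.inl (ofReal_two_mul_rpow_ne_zero s hr))
    (Or.inl ENNReal.ofReal_ne_top)] at hlt
  exact hlt.le

lemma mul_packingPre_le_measure_closedBall (μ : Measure X) (s : ℝ) (a : ℝ≥0∞) {δ R : ℝ}
    (hδ : 0 < δ) {x₀ : X} {F : Set X} (hF : F ⊆ uniformlyDenseSet μ s a δ ∩ closedBall x₀ R) :
    a * packingPre s F ≤ μ (closedBall x₀ (R + δ)) := by
  refine (mul_le_mul_right (iInf₂_le δ hδ) a).trans ?_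
  rw [ENNReal.mul_iSup]
  refine iSup_le fun P => ?_
  rw [ENNReal.mul_iSup]
  refine iSup_le fun ⟨hPc, hPadm, hPdisj⟩ => ?_
  have hsub : ∀ p ∈ P, closedBall p.1 p.2 ⊆ closedBall x₀ (R + δ) := fun p hp =>
    closedBall_subset_closedBall' (by
      linarith [mem_closedBall.mp (hF (hPadm p hp).1).2, (hPadm p hp).2.1, (hPadm p hp).2.2])
  calc a * ∑' p : P, ENNReal.ofReal ((2 * (p : X × ℝ).2) ^ s)
      = ∑' p : P, a * ENNReal.ofReal ((2 * (p : X × ℝ).2) ^ s) := ENNReal.tsum_mul_left.symm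
    _ ≤ ∑' p : P, μ (closedBall (p : X × ℝ).1 (p : X × ℝ).2) := by
        refine ENNReal.tsum_le_tsum fun ⟨p, hp⟩ => ?_
        obtain ⟨hpF, hp0, hpδ⟩ := hPadm p hp
        exact (hF hpF).1 p.2 hp0 (by linarith)
    _ = μ (⋃ p ∈ P, closedBall p.1 p.2) :=
        (measure_biUnion hPc hPdisj fun _ _ => measurableSet_closedBall).symm
    _ ≤ μ (closedBall x₀ (R + δ)) := measure_mono (iUnion₂_subset hsub)

lemma measure_setOf_lowerDensity_eq_top_inter_closedBall {μ : Measure X} {s : ℝ}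
    (hac : ∀ E : Set X, MeasurableSet E → packingMeasure s E = 0 → μ E = 0) (x₀ : X) (R : ℝ)
    (hfin : μ (closedBall x₀ (R + 1)) ≠ ⊤) :
    μ ({x | lowerDensity μ s x = ⊤} ∩ closedBall x₀ R) = 0 := by
  set D := {x | lowerDensity μ s x = ⊤} ∩ closedBall x₀ R
  by_contra hD
  set G : ℕ → ℕ → Set X := fun k i => uniformlyDenseSet μ s i (1 / (k + 1))
  have hcov : ∀ i, D ⊆ ⋃ k, G k i := by
    intro i x hx
    obtain ⟨δ, hδ, hxδ⟩ := exists_pos_mem_uniformlyDenseSet (a := i)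
      (hx.1.symm ▸ ENNReal.natCast_lt_top i)
    obtain ⟨k, hk⟩ := exists_nat_one_div_lt hδ
    exact mem_iUnion.mpr ⟨k, uniformlyDenseSet_antitone μ s i hk.le hxδ⟩
  have hGmeas : ∀ k i, MeasurableSet (G k i) := fun k i =>
    (isClosed_uniformlyDenseSet μ s (ENNReal.natCast_ne_top i) _).measurableSet
  have hGmono : ∀ i, Monotone (G · i) := fun i _ _ hkl =>
    uniformlyDenseSet_antitone μ s i (Nat.one_div_le_one_div (α := ℝ) hkl)
  have hDfin : μ D ≠ ⊤ := measure_ne_top_of_subset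
    (inter_subset_right.trans (closedBall_subset_closedBall (by linarith))) hfin
  obtain ⟨κ, hκ⟩ := exists_measure_inter_iInter_ne_zero hD hDfin hGmeas hGmono hcov
  set L := closedBall x₀ R ∩ ⋂ i, G (κ i) i
  have hLpre : packingPre s L = 0 := by
    by_contra hL
    obtain ⟨n, hn⟩ := ENNReal.exists_nat_mul_gt hL hfin
    refine hn.not_ge ((mul_packingPre_le_measure_closedBall μ s n (by positivity) (F := L)
      fun x hx => ⟨mem_iInter.mp hx.2 n, hx.1⟩).trans (measure_mono ?_))
    exact closedBall_subset_closedBall (by gcongr; rw [div_le_one (by positivity)]; simp)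
  have hLmeas : MeasurableSet L :=
    measurableSet_closedBall.inter (MeasurableSet.iInter fun i => hGmeas _ i)
  exact hκ (measure_mono_null (t := L) (fun x hx => ⟨hx.1.2, hx.2⟩) (hac L hLmeas
    (le_antisymm ((packingMeasure_le_packingPre s L).trans_eq hLpre) bot_le)))

theorem ac_packing_iff_lowerDensity_finite_general
    (μ : Measure X) (hloc : ∀ B : Set X, Bornology.IsBounded B → μ B < ⊤)
    (s : ℝ) :
    (∀ E : Set X, MeasurableSet E → packingMeasure s E = 0 → μ E = 0) ↔
      (∀ᵐ x ∂μ, lowerDensity μ s x < ⊤) := by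
  simp only [ae_iff, not_lt, top_le_iff]
  constructor
  · intro hac
    by_contra hne
    obtain ⟨x₀, -⟩ := nonempty_of_measure_ne_zero hne
    have hcov : {x | lowerDensity μ s x = ⊤} ⊆
        ⋃ n : ℕ, {x | lowerDensity μ s x = ⊤} ∩ closedBall x₀ n := fun x hx =>
      mem_iUnion.mpr ⟨⌈dist x x₀⌉₊, hx, mem_closedBall.mpr (Nat.le_ceil _)⟩
    exact hne (measure_mono_null hcov (measure_iUnion_null fun n =>
      measure_setOf_lowerDensity_eq_top_inter_closedBall hac x₀ n
        (hloc _ isBounded_closedBall).ne))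
  · intro hnull E _ hE
    have hcov : E ⊆ {x | lowerDensity μ s x = ⊤} ∪ (E ∩ {x | lowerDensity μ s x < ⊤}) :=
      fun x hx => (eq_or_ne (lowerDensity μ s x) ⊤).imp id fun h => ⟨hx, h.lt_top⟩
    exact measure_mono_null hcov
      (measure_union_null hnull (measure_inter_setOf_lowerDensity_lt_top_eq_zero μ hE))

/-- `μ ≪ 𝒫^s` if and only if the lower `s`-density of `μ` is finite `μ`-almost everywhere. -/
theorem ac_packing_iff_lowerDensity_finite
    (μ : Measure X) (hloc : ∀ B : Set X, Bornology.IsBounded B → μ B < ⊤)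
    (s : ℝ) (hs : 0 < s) :
    (∀ E : Set X, MeasurableSet E → packingMeasure s E = 0 → μ E = 0) ↔
      (∀ᵐ x ∂μ, lowerDensity μ s x < ⊤) :=
  ac_packing_iff_lowerDensity_finite_general μ hloc s
end

section
/- Let X be a metric space with a system of dyadic cubes Δ (partitioning, nesting, with each cube Q of side 2^{-k} satisfying U(x_Q, (1/6)2^{-k}) ⊆ Q ⊆ B(x_Q, (8/3)2^{-k})). Let E ⊊ X be a nonempty closed set. Then there exists a family W of cubes in Δ such that: (1) X \ E = ⋃_{W ∈ W} W with the cubes in W pairwise disjoint; and (2) diam W ≤ dist(W, E) for all W ∈ W. Moreover, if there is c > 0 such that diam U(x,r) ≥ cr whenever U(x,r) ≠ X, then also dist(W, E) < (128/c) diam W for all W ∈ W. -/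
/-!
Call a cube admissible for `E` if it misses `E` and lies at distance at least its diameter from
`E`. For `x ∉ E` the cubes containing `x` are admissible at all fine enough generations, because
`E` is closed, and at no coarse generation: an admissible cube of generation `k` containing `x`
contains a ball of radius `a 2⁻ᵏ` missing `E` whose centre is within `dist(x, E)` of `x`. So each
`x ∉ E` lies in a maximal admissible cube, and nestedness makes these Whitney cubes disjoint. The
parent of a Whitney cube `Q` of generation `k` is not admissible, which bounds `dist(Q, E)` by
twice the parent's diameter, `8 A 2⁻ᵏ`, while the hypothesis on balls gives `c a 2⁻ᵏ ≤ diam Q`.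
For `a = 1/6` and `A = 8/3` the ratio is `8 A / (c a) = 128 / c`.
-/

open Metric Set
open scoped ENNReal

/-- Distance between two sets: `dist(A,B) = inf_{a ∈ A, b ∈ B} d(a,b)` (in `ℝ≥0∞`). -/
noncomputable def setSepDist {X : Type*} [PseudoEMetricSpace X] (A B : Set X) : ℝ≥0∞ :=
  ⨅ (a ∈ A) (b ∈ B), edist a b

section

variable {X : Type*}

section SetSepDist

variable [PseudoEMetricSpace X] {A B : Set X} {x : X}

lemma setSepDist_le_infEDist (hx : x ∈ A) : setSepDist A B ≤ infEDist x B :=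
  iInf₂_le x hx

lemma infEDist_le_ediam_add_setSepDist (hx : x ∈ A) :
    infEDist x B ≤ ediam A + setSepDist A B := by
  simp only [setSepDist, ENNReal.add_iInf]
  refine le_iInf₂ fun a ha => le_iInf₂ fun b hb => ?_
  calc infEDist x B ≤ edist x b := infEDist_le_edist_of_mem hb
    _ ≤ edist x a + edist a b := edist_triangle x a b
    _ ≤ ediam A + edist a b := by gcongr; exact edist_le_ediam_of_mem hx ha

end SetSepDist

/-- The disjointness is not implied by the inequality: a singleton `{e}` with `e ∈ E` satisfies
it. -/
def WhitneyAdmissible [PseudoEMetricSpace X] (E Q : Set X) : Prop :=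
  Disjoint Q E ∧ ediam Q ≤ setSepDist Q E

section WhitneyAdmissible

variable [PseudoEMetricSpace X] {E Q : Set X} {x : X}

lemma WhitneyAdmissible.of_two_mul_ediam_le (hx : x ∈ Q) (hQ : ediam Q ≠ ∞)
    (hpos : 0 < infEDist x E) (h : 2 * ediam Q ≤ infEDist x E) : WhitneyAdmissible E Q := by
  have hlt : ediam Q < infEDist x E := by
    rcases eq_or_ne (ediam Q) 0 with h0 | h0
    · rwa [h0]
    · exact (ENNReal.lt_add_right hQ h0).trans_le (two_mul (ediam Q) ▸ h)
  refine ⟨disjoint_left.2 fun e heQ heE => ?_, ?_⟩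
  · exact (infEDist_le_edist_of_mem heE).trans (edist_le_ediam_of_mem hx heQ) |>.not_gt hlt
  · rw [← ENNReal.add_le_add_iff_left hQ, ← two_mul]
    exact h.trans (infEDist_le_ediam_add_setSepDist hx)

lemma infEDist_lt_of_not_whitneyAdmissible (hx : x ∈ Q) (hQ : ¬WhitneyAdmissible E Q)
    {r : ℝ≥0∞} (hr : ediam Q ≤ r) (hr0 : r ≠ 0) (hrtop : r ≠ ∞) :
    infEDist x E < 2 * r := by
  rw [WhitneyAdmissible, not_and_or, not_disjoint_iff, not_le] at hQ
  rcases hQ with ⟨e, heQ, heE⟩ | hsep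
  · calc infEDist x E ≤ edist x e := infEDist_le_edist_of_mem heE
      _ ≤ ediam Q := edist_le_ediam_of_mem hx heQ
      _ ≤ r := hr
      _ < 2 * r := by rw [two_mul]; exact ENNReal.lt_add_right hrtop hr0
  · have hQtop : ediam Q ≠ ∞ := ne_top_of_le_ne_top hrtop hr
    calc infEDist x E ≤ ediam Q + setSepDist Q E := infEDist_le_ediam_add_setSepDist hx
      _ < ediam Q + ediam Q := ENNReal.add_lt_add_left hQtop hsep
      _ ≤ 2 * r := by rw [two_mul]; gcongr

end WhitneyAdmissible

lemma WhitneyAdmissible.le_two_mul_dist [PseudoMetricSpace X] {E Q : Set X} {x y e : X}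
    {r : ℝ} (hQ : WhitneyAdmissible E Q) (hball : ball y r ⊆ Q) (hr : 0 < r) (hx : x ∈ Q)
    (he : e ∈ E) : r ≤ 2 * dist x e := by
  have hyQ : y ∈ Q := hball (mem_ball_self hr)
  have hye : r ≤ dist y e := not_lt.1 fun h =>
    disjoint_left.1 hQ.1 (hball (mem_ball'.2 (dist_comm e y ▸ h))) he
  have hyx : edist y x ≤ edist x e :=
    calc edist y x ≤ ediam Q := edist_le_ediam_of_mem hyQ hx
      _ ≤ setSepDist Q E := hQ.2
      _ ≤ infEDist x E := setSepDist_le_infEDist hx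
      _ ≤ edist x e := infEDist_le_edist_of_mem he
  rw [edist_dist, edist_dist, ENNReal.ofReal_le_ofReal_iff dist_nonneg] at hyx
  linarith [dist_triangle y x e]

structure IsDyadicSystem [PseudoMetricSpace X] (Δ : ℤ → Set (Set X)) (a A : ℝ) : Prop where
  sUnion_eq_univ : ∀ k, ⋃₀ Δ k = univ
  pairwise_disjoint : ∀ k, (Δ k).Pairwise fun Q R => Disjoint Q R
  subset_or_disjoint :
    ∀ (k m : ℤ) (Q R : Set X), m ≤ k → Q ∈ Δ k → R ∈ Δ m → Q ⊆ R ∨ Disjoint Q R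
  exists_ball_subset_subset_closedBall : ∀ k, ∀ Q ∈ Δ k, ∃ x : X,
    ball x (a * (2 : ℝ) ^ (-k)) ⊆ Q ∧ Q ⊆ closedBall x (A * (2 : ℝ) ^ (-k))

def whitneyFamily [PseudoEMetricSpace X] (Δ : ℤ → Set (Set X)) (E : Set X) : Set (Set X) :=
  {Q | ∃ k, Q ∈ Δ k ∧ WhitneyAdmissible E Q ∧
    ∀ j < k, ∀ R ∈ Δ j, Q ⊆ R → ¬WhitneyAdmissible E R}

namespace IsDyadicSystem

variable [PseudoMetricSpace X] {Δ : ℤ → Set (Set X)} {a A : ℝ} {E Q R : Set X} {x : X}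
  {j k : ℤ}

lemma exists_mem (hΔ : IsDyadicSystem Δ a A) (k : ℤ) (x : X) : ∃ Q ∈ Δ k, x ∈ Q :=
  mem_sUnion.1 (hΔ.sUnion_eq_univ k ▸ mem_univ x)

lemma subset_of_mem (hΔ : IsDyadicSystem Δ a A) (hjk : j ≤ k) (hQ : Q ∈ Δ k) (hR : R ∈ Δ j)
    (hxQ : x ∈ Q) (hxR : x ∈ R) : Q ⊆ R :=
  (hΔ.subset_or_disjoint k j Q R hjk hQ hR).resolve_right (not_disjoint_iff.2 ⟨x, hxQ, hxR⟩)

lemma ediam_le_of_mem (hΔ : IsDyadicSystem Δ a A) (hQ : Q ∈ Δ k) :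
    ediam Q ≤ ENNReal.ofReal (2 * A * 2 ^ (-k)) := by
  obtain ⟨y, -, hQy⟩ := hΔ.exists_ball_subset_subset_closedBall k Q hQ
  refine Metric.ediam_le fun p hp q hq => ?_
  rw [edist_dist]
  apply ENNReal.ofReal_le_ofReal
  have hpy := mem_closedBall.1 (hQy hp)
  have hqy := mem_closedBall.1 (hQy hq)
  linarith [dist_triangle_right p q y]

lemma exists_whitneyAdmissible (hΔ : IsDyadicSystem Δ a A) (hE : IsClosed E) (hx : x ∉ E) :
    ∃ k, ∃ Q ∈ Δ k, x ∈ Q ∧ WhitneyAdmissible E Q := by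
  obtain ⟨ε, hε, hεx⟩ := exists_real_pos_lt_infEDist_of_notMem_closure (hE.closure_eq ▸ hx)
  obtain ⟨n, hn⟩ : ∃ n : ℕ, 4 * A * (1 / 2) ^ n < ε :=
    (((tendsto_pow_atTop_nhds_zero_of_lt_one (by norm_num) (by norm_num)).const_mul
      (4 * A)).eventually (gt_mem_nhds (by simpa using hε))).exists
  obtain ⟨Q, hQ, hxQ⟩ := hΔ.exists_mem n x
  have hQdiam := hΔ.ediam_le_of_mem hQ
  refine ⟨n, Q, hQ, hxQ, .of_two_mul_ediam_le hxQ
    (ne_top_of_le_ne_top ENNReal.ofReal_ne_top hQdiam) ((ENNReal.ofReal_pos.2 hε).trans hεx) ?_⟩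
  calc 2 * ediam Q ≤ 2 * ENNReal.ofReal (2 * A * 2 ^ (-(n : ℤ))) := by gcongr
    _ = ENNReal.ofReal (4 * A * (1 / 2) ^ n) := by
      rw [← ENNReal.ofReal_ofNat 2, ← ENNReal.ofReal_mul zero_le_two, zpow_neg, zpow_natCast,
        one_div, inv_pow]
      ring_nf
    _ ≤ infEDist x E := (ENNReal.ofReal_le_ofReal hn.le).trans hεx.le

lemma bddBelow_generations_whitneyAdmissible (hΔ : IsDyadicSystem Δ a A) (ha : 0 < a)
    (hEne : E.Nonempty) (x : X) :
    ∃ b : ℤ, ∀ k, (∃ Q ∈ Δ k, x ∈ Q ∧ WhitneyAdmissible E Q) → b ≤ k := by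
  obtain ⟨e, he⟩ := hEne
  obtain ⟨n, hn⟩ := pow_unbounded_of_one_lt (2 * dist x e / a) one_lt_two
  refine ⟨-n, fun k ⟨Q, hQ, hxQ, hadm⟩ => ?_⟩
  obtain ⟨y, hball, -⟩ := hΔ.exists_ball_subset_subset_closedBall k Q hQ
  have hk : a * 2 ^ (-k) ≤ 2 * dist x e := hadm.le_two_mul_dist hball (by positivity) hxQ he
  have : (2 : ℝ) ^ (-k) < 2 ^ (n : ℤ) := by
    rw [zpow_natCast]
    exact ((le_div_iff₀' ha).2 hk).trans_lt hn
  have := (zpow_lt_zpow_iff_right₀ one_lt_two).1 this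
  omega

lemma exists_mem_whitneyFamily (hΔ : IsDyadicSystem Δ a A) (ha : 0 < a) (hE : IsClosed E)
    (hEne : E.Nonempty) (hx : x ∉ E) : ∃ Q ∈ whitneyFamily Δ E, x ∈ Q := by
  obtain ⟨k, ⟨Q, hQ, hxQ, hadm⟩, hmin⟩ := Int.exists_least_of_bdd
    (hΔ.bddBelow_generations_whitneyAdmissible ha hEne x) (hΔ.exists_whitneyAdmissible hE hx)
  exact ⟨Q, ⟨k, hQ, hadm, fun j hjk R hR hQR hRadm => (hmin j ⟨R, hR, hQR hxQ, hRadm⟩).not_gt hjk⟩,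
    hxQ⟩

lemma sUnion_whitneyFamily (hΔ : IsDyadicSystem Δ a A) (ha : 0 < a) (hE : IsClosed E)
    (hEne : E.Nonempty) : ⋃₀ whitneyFamily Δ E = Eᶜ := by
  refine subset_antisymm (sUnion_subset ?_) fun x hx => ?_
  · rintro Q ⟨-, -, hadm, -⟩
    exact hadm.1.subset_compl_right
  · obtain ⟨Q, hQ, hxQ⟩ := hΔ.exists_mem_whitneyFamily ha hE hEne hx
    exact mem_sUnion_of_mem hxQ hQ

lemma pairwise_disjoint_whitneyFamily (hΔ : IsDyadicSystem Δ a A) :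
    (whitneyFamily Δ E).Pairwise fun Q R => Disjoint Q R := by
  rintro Q ⟨k, hQ, hQadm, hQmax⟩ R ⟨j, hR, hRadm, hRmax⟩ hne
  rcases lt_trichotomy k j with hkj | rfl | hjk
  · exact ((hΔ.subset_or_disjoint j k R Q hkj.le hR hQ).resolve_left
      fun hRQ => hRmax k hkj Q hQ hRQ hQadm).symm
  · exact hΔ.pairwise_disjoint k hQ hR hne
  · exact (hΔ.subset_or_disjoint k j Q R hjk.le hQ hR).resolve_left
      fun hQR => hQmax j hjk R hR hQR hRadm

lemma setSepDist_lt_mul_ediam (hΔ : IsDyadicSystem Δ a A) (ha : 0 < a) (hA : 0 < A)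
    (hEne : E.Nonempty) {c : ℝ} (hc : 0 < c)
    (hcball : ∀ (x : X) (r : ℝ), 0 < r → ball x r ≠ univ →
      ENNReal.ofReal (c * r) ≤ ediam (ball x r))
    (hQ : Q ∈ whitneyFamily Δ E) :
    setSepDist Q E < ENNReal.ofReal (8 * A / (c * a)) * ediam Q := by
  obtain ⟨k, hQk, hadm, hmax⟩ := hQ
  obtain ⟨y, hball, -⟩ := hΔ.exists_ball_subset_subset_closedBall k Q hQk
  have hyQ : y ∈ Q := hball (mem_ball_self (by positivity))
  obtain ⟨P, hP, hyP⟩ := hΔ.exists_mem (k - 1) y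
  have hQP : Q ⊆ P := hΔ.subset_of_mem (by omega) hQk hP hyQ hyP
  have hQdiam : ENNReal.ofReal (c * (a * 2 ^ (-k))) ≤ ediam Q := by
    refine (hcball y _ (by positivity) fun h => ?_).trans (ediam_mono hball)
    obtain ⟨e, he⟩ := hEne
    exact disjoint_left.1 hadm.1 (hball (h ▸ mem_univ e)) he
  calc setSepDist Q E ≤ infEDist y E := setSepDist_le_infEDist hyQ
    _ < 2 * ENNReal.ofReal (2 * A * 2 ^ (-(k - 1))) :=
      infEDist_lt_of_not_whitneyAdmissible hyP (hmax _ (by omega) P hP hQP)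
        (hΔ.ediam_le_of_mem hP) (by positivity) ENNReal.ofReal_ne_top
    _ = ENNReal.ofReal (8 * A / (c * a)) * ENNReal.ofReal (c * (a * 2 ^ (-k))) := by
      rw [← ENNReal.ofReal_ofNat 2, ← ENNReal.ofReal_mul zero_le_two,
        ← ENNReal.ofReal_mul (by positivity), neg_sub, zpow_sub₀ two_ne_zero, zpow_one, zpow_neg]
      congr 1
      field_simp
      ring
    _ ≤ ENNReal.ofReal (8 * A / (c * a)) * ediam Q := by gcongr

end IsDyadicSystem

end

theorem whitney_decomposition_general
    {X : Type*} [MetricSpace X] (Δ : ℤ → Set (Set X))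
    (hpart : ∀ k : ℤ, ⋃₀ (Δ k) = univ)
    (hdisj : ∀ k : ℤ, (Δ k).Pairwise fun Q R => Disjoint Q R)
    (hnest : ∀ (k m : ℤ) (Q R : Set X), m ≤ k → Q ∈ Δ k → R ∈ Δ m → Q ⊆ R ∨ Disjoint Q R)
    (hround : ∀ (k : ℤ), ∀ Q ∈ Δ k, ∃ x : X,
      ball x ((1 / 6) * (2 : ℝ) ^ (-k)) ⊆ Q ∧ Q ⊆ closedBall x ((8 / 3) * (2 : ℝ) ^ (-k)))
    (E : Set X) (hEcl : IsClosed E) (hEne : E.Nonempty) :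
    ∃ W : Set (Set X),
      (∀ w ∈ W, ∃ k : ℤ, w ∈ Δ k) ∧
      ⋃₀ W = Eᶜ ∧
      (W.Pairwise fun a b => Disjoint a b) ∧
      (∀ w ∈ W, EMetric.diam w ≤ setSepDist w E) ∧
      (∀ c : ℝ, 0 < c →
        (∀ (x : X) (r : ℝ), 0 < r → ball x r ≠ univ →
          ENNReal.ofReal (c * r) ≤ EMetric.diam (ball x r)) →
        ∀ w ∈ W, setSepDist w E < ENNReal.ofReal (128 / c) * EMetric.diam w) := by
  have hΔ : IsDyadicSystem Δ (1 / 6) (8 / 3) := ⟨hpart, hdisj, hnest, hround⟩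
  refine ⟨whitneyFamily Δ E, fun Q ⟨k, hQ, _⟩ => ⟨k, hQ⟩,
    hΔ.sUnion_whitneyFamily (by norm_num) hEcl hEne, hΔ.pairwise_disjoint_whitneyFamily,
    fun Q ⟨_, _, hadm, _⟩ => hadm.2, fun c hc hcball Q hQ => ?_⟩
  have h128 : 8 * (8 / 3) / (c * (1 / 6)) = 128 / c := by field_simp; norm_num
  rw [← h128]
  exact hΔ.setSepDist_lt_mul_ediam (by norm_num) (by norm_num) hEne hc hcball hQ

/-- Whitney decomposition: given a system of dyadic cubes `Δ` in a metric space and a nonempty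
closed proper subset `E`, there is a pairwise disjoint family `W` of cubes partitioning `X \ E`
with `diam W ≤ dist(W,E)`; moreover, if open balls have diameter at least `c r` (unless they are
all of `X`), then also `dist(W,E) < (128/c) diam W`. -/
theorem whitney_decomposition
    {X : Type*} [MetricSpace X] (Δ : ℤ → Set (Set X))
    (hpart : ∀ k : ℤ, ⋃₀ (Δ k) = univ)
    (hdisj : ∀ k : ℤ, (Δ k).Pairwise fun Q R => Disjoint Q R)
    (hnest : ∀ (k m : ℤ) (Q R : Set X), m ≤ k → Q ∈ Δ k → R ∈ Δ m → Q ⊆ R ∨ Disjoint Q R)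
    (hround : ∀ (k : ℤ), ∀ Q ∈ Δ k, ∃ x : X,
      ball x ((1 / 6) * (2 : ℝ) ^ (-k)) ⊆ Q ∧ Q ⊆ closedBall x ((8 / 3) * (2 : ℝ) ^ (-k)))
    (E : Set X) (hEcl : IsClosed E) (hEne : E.Nonempty) (hEproper : E ≠ univ) :
    ∃ W : Set (Set X),
      (∀ w ∈ W, ∃ k : ℤ, w ∈ Δ k) ∧
      ⋃₀ W = Eᶜ ∧
      (W.Pairwise fun a b => Disjoint a b) ∧
      (∀ w ∈ W, EMetric.diam w ≤ setSepDist w E) ∧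
      (∀ c : ℝ, 0 < c →
        (∀ (x : X) (r : ℝ), 0 < r → ball x r ≠ univ →
          ENNReal.ofReal (c * r) ≤ EMetric.diam (ball x r)) →
        ∀ w ∈ W, setSepDist w E < ENNReal.ofReal (128 / c) * EMetric.diam w) :=
  whitney_decomposition_general Δ hpart hdisj hnest hround E hEcl hEne
end

section
/- Let X be a metric space with a doubling Borel measure μ (with doubling constant C: 0 < μ(B(x,2r)) ≤ C μ(B(x,r)) < ∞ for all x, r) and a system of dyadic cubes Δ in which each cube Q of side 2^{-k} contains the open ball U(x_Q, (1/6)2^{-k}) and is contained in the closed ball B(x_Q, (8/3)2^{-k}). Then every cube Q ∈ Δ has at most C⁷ children; moreover, every child R of Q satisfies μ(R) ≥ C^{-7} μ(Q). -/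
open MeasureTheory Metric Set
open scoped ENNReal

/-- In a metric space with a doubling measure `μ` (doubling constant `C`), a dyadic cube `Q` of
side `2^{-k}` (containing `U(x_Q, 2^{-k}/6)` and contained in `B(x_Q, (8/3)2^{-k})`) has at most
`C⁷` children, and each child `R` satisfies `μ(R) ≥ C^{-7} μ(Q)`. -/
theorem cube_children_bound
    {X : Type*} [MetricSpace X] [MeasurableSpace X] [BorelSpace X]
    (μ : Measure X) (C : ℝ) (hC : 1 ≤ C)
    (hdbl : ∀ (x : X) (r : ℝ), 0 < r →
      μ (closedBall x (2 * r)) ≤ ENNReal.ofReal C * μ (closedBall x r))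
    (hposfin : ∀ (x : X) (r : ℝ), 0 < r →
      0 < μ (closedBall x r) ∧ μ (closedBall x r) < ⊤)
    (k : ℤ) (Q : Set X) (xQ : X)
    (hQl : ball xQ ((1 / 6) * (2 : ℝ) ^ (-k)) ⊆ Q)
    (hQu : Q ⊆ closedBall xQ ((8 / 3) * (2 : ℝ) ^ (-k)))
    (𝒞 : Set (Set X))
    (hpart : ⋃₀ 𝒞 = Q)
    (hdisj : 𝒞.Pairwise fun a b => Disjoint a b)
    (hchild : ∀ R ∈ 𝒞, ∃ xR : X,
      ball xR ((1 / 6) * (2 : ℝ) ^ (-(k + 1))) ⊆ R ∧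
      R ⊆ closedBall xR ((8 / 3) * (2 : ℝ) ^ (-(k + 1)))) :
    𝒞.Finite ∧ (𝒞.ncard : ℝ) ≤ C ^ 7 ∧ ∀ R ∈ 𝒞, μ Q ≤ ENNReal.ofReal (C ^ 7) * μ R := by
  classical
  set a : ℝ := (2 : ℝ) ^ (-k) with ha
  have ha0 : 0 < a := by positivity
  have hhalf : (2 : ℝ) ^ (-(k + 1)) = a / 2 := by
    rw [ha, show -(k + 1) = -k - 1 by ring, zpow_sub₀ (by norm_num : (2:ℝ) ≠ 0)]
    norm_num
  have hchild' : ∀ R : Set X, ∃ x : X, R ∈ 𝒞 →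
      (ball x ((1 / 6) * (2 : ℝ) ^ (-(k + 1))) ⊆ R ∧
        R ⊆ closedBall x ((8 / 3) * (2 : ℝ) ^ (-(k + 1)))) := by
    intro R
    by_cases hR : R ∈ 𝒞
    · obtain ⟨x, h1, h2⟩ := hchild R hR
      exact ⟨x, fun _ => ⟨h1, h2⟩⟩
    · exact ⟨xQ, fun h => absurd h hR⟩
  choose xR hxR using hchild'
  have hxR1 : ∀ R ∈ 𝒞, ball (xR R) ((1 / 6) * (2 : ℝ) ^ (-(k + 1))) ⊆ R :=
    fun R hR => (hxR R hR).1
  -- iterated doubling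
  have hiter : ∀ (x : X) (r : ℝ), 0 < r → ∀ n : ℕ,
      μ (closedBall x ((2 : ℝ) ^ n * r)) ≤ ENNReal.ofReal C ^ n * μ (closedBall x r) := by
    intro x r hr n
    induction n with
    | zero => simp
    | succ n ih =>
      have he : (2 : ℝ) ^ (n + 1) * r = 2 * ((2 : ℝ) ^ n * r) := by ring
      calc μ (closedBall x ((2 : ℝ) ^ (n + 1) * r))
          = μ (closedBall x (2 * ((2 : ℝ) ^ n * r))) := by rw [he]
        _ ≤ ENNReal.ofReal C * μ (closedBall x ((2 : ℝ) ^ n * r)) :=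
            hdbl x ((2 : ℝ) ^ n * r) (by positivity)
        _ ≤ ENNReal.ofReal C * (ENNReal.ofReal C ^ n * μ (closedBall x r)) := by gcongr
        _ = ENNReal.ofReal C ^ (n + 1) * μ (closedBall x r) := by ring
  have hC7 : ENNReal.ofReal (C ^ 7) = ENNReal.ofReal C ^ 7 :=
    ENNReal.ofReal_pow (by linarith) 7
  -- the small ball inside each child
  set B : Set X → Set X := fun R => closedBall (xR R) (a / 24) with hB
  have hBsub : ∀ R ∈ 𝒞, B R ⊆ R := by
    intro R hR
    refine subset_trans ?_ (hxR1 R hR)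
    have : (1 / 6 : ℝ) * (2 : ℝ) ^ (-(k + 1)) = a / 12 := by rw [hhalf]; ring
    rw [this]
    exact closedBall_subset_ball (by linarith)
  have hkey : ∀ R ∈ 𝒞, μ Q ≤ ENNReal.ofReal (C ^ 7) * μ (B R) := by
    intro R hR
    have hxmem : xR R ∈ Q := by
      have h1 : xR R ∈ R := (hxR1 R hR) (mem_ball_self (by positivity))
      rw [← hpart]; exact ⟨R, hR, h1⟩
    have hd : dist xQ (xR R) ≤ 8 / 3 * a := by
      have := hQu hxmem
      rw [mem_closedBall] at this
      rwa [dist_comm]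
    have hQsub : Q ⊆ closedBall (xR R) ((2 : ℝ) ^ (7 : ℕ) * (a / 24)) := by
      intro y hy
      have hy' := hQu hy
      rw [mem_closedBall] at hy' ⊢
      have := dist_triangle y xQ (xR R)
      have : dist y (xR R) ≤ 16 / 3 * a := by linarith
      linarith [this]
    calc μ Q ≤ μ (closedBall (xR R) ((2 : ℝ) ^ (7 : ℕ) * (a / 24))) := measure_mono hQsub
      _ ≤ ENNReal.ofReal C ^ 7 * μ (closedBall (xR R) (a / 24)) :=
          hiter (xR R) (a / 24) (by positivity) 7
      _ = ENNReal.ofReal (C ^ 7) * μ (B R) := by rw [hC7]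
  have hQpos : 0 < μ Q := by
    have h1 : closedBall xQ (a / 12) ⊆ Q := by
      refine subset_trans ?_ hQl
      have : (1 / 6 : ℝ) * a = a / 6 := by ring
      rw [this]
      exact closedBall_subset_ball (by linarith)
    exact lt_of_lt_of_le (hposfin xQ (a / 12) (by positivity)).1 (measure_mono h1)
  have hQfin : μ Q < ⊤ :=
    lt_of_le_of_lt (measure_mono hQu) (hposfin xQ (8 / 3 * a) (by positivity)).2
  -- counting bound for finite subfamilies
  have hcount : ∀ t : Finset (Set X), ↑t ⊆ 𝒞 → (t.card : ℝ) ≤ C ^ 7 := by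
    intro t ht
    have hdisjB : (↑t : Set (Set X)).PairwiseDisjoint B := by
      intro R hR S hS hne
      exact Disjoint.mono (hBsub R (ht hR)) (hBsub S (ht hS)) (hdisj (ht hR) (ht hS) hne)
    have hmeas : ∀ R ∈ t, MeasurableSet (B R) := fun R _ => measurableSet_closedBall
    have hsum : ∑ R ∈ t, μ (B R) = μ (⋃ R ∈ t, B R) :=
      (measure_biUnion_finset hdisjB hmeas).symm
    have hUsub : (⋃ R ∈ t, B R) ⊆ Q := by
      intro y hy
      rw [mem_iUnion₂] at hy
      obtain ⟨R, hR, hyR⟩ := hy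
      rw [← hpart]
      exact ⟨R, ht hR, hBsub R (ht hR) hyR⟩
    have h1 : (t.card : ℝ≥0∞) * μ Q ≤ ENNReal.ofReal (C ^ 7) * μ Q := by
      calc (t.card : ℝ≥0∞) * μ Q = ∑ _R ∈ t, μ Q := by
            rw [Finset.sum_const, nsmul_eq_mul]
        _ ≤ ∑ R ∈ t, ENNReal.ofReal (C ^ 7) * μ (B R) :=
            Finset.sum_le_sum fun R hR => hkey R (ht hR)
        _ = ENNReal.ofReal (C ^ 7) * ∑ R ∈ t, μ (B R) := by rw [Finset.mul_sum]
        _ = ENNReal.ofReal (C ^ 7) * μ (⋃ R ∈ t, B R) := by rw [hsum]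
        _ ≤ ENNReal.ofReal (C ^ 7) * μ Q := mul_le_mul_right (measure_mono hUsub) _
    have h2 : (t.card : ℝ≥0∞) ≤ ENNReal.ofReal (C ^ 7) :=
      (ENNReal.mul_le_mul_iff_left hQpos.ne' hQfin.ne).mp h1
    have h3 : (t.card : ℝ≥0∞) = ENNReal.ofReal (t.card : ℝ) := by
      rw [ENNReal.ofReal_natCast]
    rw [h3] at h2
    exact (ENNReal.ofReal_le_ofReal_iff (by positivity)).mp h2
  have hfin : 𝒞.Finite := by
    by_contra hinf
    have hinf' : 𝒞.Infinite := hinf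
    obtain ⟨t, ht, hcard⟩ := hinf'.exists_subset_card_eq (⌈C ^ 7⌉₊ + 1)
    have := hcount t ht
    rw [hcard] at this
    have h4 : C ^ 7 ≤ (⌈C ^ 7⌉₊ : ℝ) := Nat.le_ceil _
    push_cast at this
    linarith
  refine ⟨hfin, ?_, fun R hR => le_trans (hkey R hR) (by gcongr; exact hBsub R hR)⟩
  have := hcount hfin.toFinset (by simp)
  rwa [← Set.ncard_eq_toFinset_card 𝒞 hfin] at this
end
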